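/- Doubling-of-variables lemma, existence and localization of the maximizer: let T > 0, η > 0, β > 0, S > 0, let f : ℝ² → ℝ, and let u, u' : ℝ² × [0,T] → ℝ be continuous functions with u(·,0) = u'(·,0) = f, |u(x,t) − u(y,t)| ≤ ‖x−y‖ for all x,y ∈ ℝ² and t ∈ [0,T], u(x,t) ≤ f(x) for all (x,t), and 0 ≤ f(y) − u'(y,s) ≤ S·s for all (y,s). Set M := sup over (x,t) ∈ ℝ²×[0,T] of ( u(x,t) − u'(x,t) − η·t − 2β·‖x‖² ) and assume M > 0. Then for all ε, α ∈ (0,1], the function ψ(x,t,y,s) := u(x,t) − u'(y,s) − ‖x−y‖²/ε² − (t−s)²/α² − η·t − β(‖x‖² + ‖y‖²) attains its maximum M̄ at some point (x̄,t̄,ȳ,s̄) ∈ ℝ²×[0,T]×ℝ²×[0,T], and: (1) 0 < M ≤ M̄; (2) ‖x̄−ȳ‖² ≤ C·ε², (t̄−s̄)² ≤ C·α² and ‖x̄‖² + ‖ȳ‖² ≤ C/β, where C = 2(S·T + 1). -/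
import Mathlib

open Real

/-- The Euclidean norm on `ℝ²`. -/
noncomputable def enorm2 (x : ℝ × ℝ) : ℝ := Real.sqrt (x.1 ^ 2 + x.2 ^ 2)

/-- The penalized "doubled variables" functional
`ψ(x,t,y,s) = u(x,t) - u'(y,s) - ‖x-y‖²/ε² - (t-s)²/α² - η t - β(‖x‖² + ‖y‖²)`. -/
noncomputable def psi (u u' : ℝ × ℝ → ℝ → ℝ) (η β ε α : ℝ)
    (x : ℝ × ℝ) (t : ℝ) (y : ℝ × ℝ) (s : ℝ) : ℝ :=
  u x t - u' y s - enorm2 (x - y) ^ 2 / ε ^ 2 - (t - s) ^ 2 / α ^ 2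
    - η * t - β * (enorm2 x ^ 2 + enorm2 y ^ 2)

/-- `M = sup_{x, t ∈ [0,T]} ( u(x,t) - u'(x,t) - η t - 2β‖x‖² )`. -/
noncomputable def Msup (u u' : ℝ × ℝ → ℝ → ℝ) (η β T : ℝ) : ℝ :=
  sSup {m : ℝ | ∃ (x : ℝ × ℝ) (t : ℝ), t ∈ Set.Icc 0 T ∧
    m = u x t - u' x t - η * t - 2 * β * enorm2 x ^ 2}

lemma enorm2_nonneg (x : ℝ × ℝ) : 0 ≤ enorm2 x := Real.sqrt_nonneg _
lemma enorm2_sq (x : ℝ × ℝ) : enorm2 x ^ 2 = x.1 ^ 2 + x.2 ^ 2 :=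
  Real.sq_sqrt (by positivity)
lemma enorm2_zero : enorm2 0 = 0 := by simp [enorm2]
lemma enorm2_cont : Continuous enorm2 := by
  unfold enorm2
  exact Real.continuous_sqrt.comp (by fun_prop)
lemma norm_le_enorm2 (x : ℝ × ℝ) : ‖x‖ ≤ enorm2 x := by
  rw [Prod.norm_def]
  have h1 : |x.1| ≤ enorm2 x := by
    rw [← Real.sqrt_sq_eq_abs]; exact Real.sqrt_le_sqrt (by nlinarith [sq_nonneg x.2])
  have h2 : |x.2| ≤ enorm2 x := by
    rw [← Real.sqrt_sq_eq_abs]; exact Real.sqrt_le_sqrt (by nlinarith [sq_nonneg x.1])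
  simpa [Real.norm_eq_abs] using max_le h1 h2

set_option maxHeartbeats 1000000

/-- Doubling-of-variables lemma: existence and localization of the maximizer. -/
theorem stmt14 (T η β S : ℝ) (hT : 0 < T) (hη : 0 < η) (hβ : 0 < β) (hS : 0 < S)
    (f : ℝ × ℝ → ℝ) (u u' : ℝ × ℝ → ℝ → ℝ)
    (hu_cont : ContinuousOn (fun p : (ℝ × ℝ) × ℝ => u p.1 p.2) (Set.univ ×ˢ Set.Icc 0 T))
    (hu'_cont : ContinuousOn (fun p : (ℝ × ℝ) × ℝ => u' p.1 p.2) (Set.univ ×ˢ Set.Icc 0 T))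
    (hu0 : ∀ x : ℝ × ℝ, u x 0 = f x)
    (hu'0 : ∀ x : ℝ × ℝ, u' x 0 = f x)
    (hulip : ∀ (x y : ℝ × ℝ) (t : ℝ), t ∈ Set.Icc 0 T → |u x t - u y t| ≤ enorm2 (x - y))
    (hule : ∀ (x : ℝ × ℝ) (t : ℝ), t ∈ Set.Icc 0 T → u x t ≤ f x)
    (hu'grow : ∀ (y : ℝ × ℝ) (s : ℝ), s ∈ Set.Icc 0 T →
      0 ≤ f y - u' y s ∧ f y - u' y s ≤ S * s)
    (hMpos : 0 < Msup u u' η β T) :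
    ∀ ε ∈ Set.Ioc (0 : ℝ) 1, ∀ α ∈ Set.Ioc (0 : ℝ) 1,
      ∃ (xb yb : ℝ × ℝ) (tb sb : ℝ), tb ∈ Set.Icc 0 T ∧ sb ∈ Set.Icc 0 T ∧
        (∀ (x y : ℝ × ℝ) (t s : ℝ), t ∈ Set.Icc 0 T → s ∈ Set.Icc 0 T →
          psi u u' η β ε α x t y s ≤ psi u u' η β ε α xb tb yb sb) ∧
        Msup u u' η β T ≤ psi u u' η β ε α xb tb yb sb ∧
        enorm2 (xb - yb) ^ 2 ≤ 2 * (S * T + 1) * ε ^ 2 ∧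
        (tb - sb) ^ 2 ≤ 2 * (S * T + 1) * α ^ 2 ∧
        enorm2 xb ^ 2 + enorm2 yb ^ 2 ≤ 2 * (S * T + 1) / β := by
  intro ε hε α hα
  obtain ⟨hε0, hε1⟩ := hε
  obtain ⟨hα0, hα1⟩ := hα
  have h0T : (0 : ℝ) ∈ Set.Icc 0 T := ⟨le_refl _, hT.le⟩
  -- diagonal value of psi
  have hdiag : ∀ (x : ℝ × ℝ) (t : ℝ),
      psi u u' η β ε α x t x t = u x t - u' x t - η * t - 2 * β * enorm2 x ^ 2 := by
    intro x t
    unfold psi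
    rw [sub_self x, sub_self t, enorm2_zero]
    ring
  -- basic upper bound on u - u'
  have hf : ∀ (x y : ℝ × ℝ) (t s : ℝ), t ∈ Set.Icc 0 T → s ∈ Set.Icc 0 T →
      u x t - u' y s ≤ enorm2 (x - y) + S * T := by
    intro x y t s ht hs
    have h1 := hule x t ht
    have h2 := (hu'grow y s hs).2
    have h3 := hulip x y 0 h0T
    rw [hu0, hu0] at h3
    have h3' := (abs_le.mp h3).2
    have h4 : S * s ≤ S * T := mul_le_mul_of_nonneg_left hs.2 hS.le
    linarith
  -- key quantitative upper bound for psi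
  have hub : ∀ (x y : ℝ × ℝ) (t s : ℝ), t ∈ Set.Icc 0 T → s ∈ Set.Icc 0 T →
      psi u u' η β ε α x t y s ≤ S * T + 1/2 - enorm2 (x - y) ^ 2 / (2 * ε ^ 2)
        - (t - s) ^ 2 / α ^ 2 - β * (enorm2 x ^ 2 + enorm2 y ^ 2) := by
    intro x y t s ht hs
    have h1 := hf x y t s ht hs
    set r := enorm2 (x - y) with hrdef
    have hr0 : 0 ≤ r := enorm2_nonneg _
    have hr : r ≤ r ^ 2 / (2 * ε ^ 2) + 1/2 := by
      have h2e : (0:ℝ) < 2 * ε ^ 2 := by positivity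
      have : r - 1/2 ≤ r ^ 2 / (2 * ε ^ 2) := by
        rw [le_div_iff₀ h2e]
        nlinarith [sq_nonneg (r - ε), mul_nonneg (mul_nonneg hr0 hε0.le) (sub_nonneg.2 hε1)]
      linarith
    have hsplit : r ^ 2 / ε ^ 2 = r ^ 2 / (2 * ε ^ 2) + r ^ 2 / (2 * ε ^ 2) := by
      field_simp
      ring
    have hηt : 0 ≤ η * t := mul_nonneg hη.le ht.1
    unfold psi
    rw [← hrdef, hsplit]
    linarith
  -- the compact region
  set c : ℝ := (S * T + 1) / β with hcdef
  have hc0 : 0 < c := by positivity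
  set K : Set (ℝ × ℝ) := Metric.closedBall 0 (Real.sqrt c) with hKdef
  have hKx : ∀ x : ℝ × ℝ, enorm2 x ^ 2 ≤ c → x ∈ K := by
    intro x hx
    rw [hKdef, Metric.mem_closedBall, dist_zero_right]
    refine le_trans (norm_le_enorm2 x) ?_
    have : enorm2 x = Real.sqrt (enorm2 x ^ 2) := by
      rw [Real.sqrt_sq (enorm2_nonneg x)]
    rw [this]
    exact Real.sqrt_le_sqrt hx
  set D : Set (((ℝ × ℝ) × ℝ) × ((ℝ × ℝ) × ℝ)) :=
    (K ×ˢ Set.Icc 0 T) ×ˢ (K ×ˢ Set.Icc 0 T) with hDdef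
  have hDcomp : IsCompact D := by
    exact (((isCompact_closedBall _ _).prod isCompact_Icc).prod
      ((isCompact_closedBall _ _).prod isCompact_Icc))
  have hDne : D.Nonempty := by
    refine ⟨((0, 0), (0, 0)), ⟨⟨?_, h0T⟩, ⟨?_, h0T⟩⟩⟩ <;>
      simp [hKdef, Real.sqrt_nonneg]
  set F : ((ℝ × ℝ) × ℝ) × ((ℝ × ℝ) × ℝ) → ℝ :=
    fun p => psi u u' η β ε α p.1.1 p.1.2 p.2.1 p.2.2 with hFdef
  have hFcont : ContinuousOn F D := by
    have hD1 : Set.MapsTo (fun p : ((ℝ × ℝ) × ℝ) × ((ℝ × ℝ) × ℝ) => p.1) D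
        (Set.univ ×ˢ Set.Icc 0 T) := fun p hp => ⟨trivial, hp.1.2⟩
    have hD2 : Set.MapsTo (fun p : ((ℝ × ℝ) × ℝ) × ((ℝ × ℝ) × ℝ) => p.2) D
        (Set.univ ×ˢ Set.Icc 0 T) := fun p hp => ⟨trivial, hp.2.2⟩
    have h1 : ContinuousOn (fun p : ((ℝ × ℝ) × ℝ) × ((ℝ × ℝ) × ℝ) => u p.1.1 p.1.2) D :=
      hu_cont.comp continuous_fst.continuousOn hD1
    have h2 : ContinuousOn (fun p : ((ℝ × ℝ) × ℝ) × ((ℝ × ℝ) × ℝ) => u' p.2.1 p.2.2) D :=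
      hu'_cont.comp continuous_snd.continuousOn hD2
    have h3 : Continuous (fun p : ((ℝ × ℝ) × ℝ) × ((ℝ × ℝ) × ℝ) =>
        enorm2 (p.1.1 - p.2.1) ^ 2 / ε ^ 2 + (p.1.2 - p.2.2) ^ 2 / α ^ 2
          + η * p.1.2 + β * (enorm2 p.1.1 ^ 2 + enorm2 p.2.1 ^ 2)) := by
      have := enorm2_cont
      fun_prop
    have : ContinuousOn (fun p : ((ℝ × ℝ) × ℝ) × ((ℝ × ℝ) × ℝ) =>
        u p.1.1 p.1.2 - u' p.2.1 p.2.2 -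
          (enorm2 (p.1.1 - p.2.1) ^ 2 / ε ^ 2 + (p.1.2 - p.2.2) ^ 2 / α ^ 2
            + η * p.1.2 + β * (enorm2 p.1.1 ^ 2 + enorm2 p.2.1 ^ 2))) D :=
      (h1.sub h2).sub h3.continuousOn
    refine this.congr ?_
    intro p _
    simp only [hFdef, psi]
    ring
  obtain ⟨pb, hpbD, hpbmax⟩ := hDcomp.exists_isMaxOn hDne hFcont
  -- a positive diagonal point
  unfold Msup at hMpos
  have hne : {m : ℝ | ∃ (x : ℝ × ℝ) (t : ℝ), t ∈ Set.Icc 0 T ∧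
      m = u x t - u' x t - η * t - 2 * β * enorm2 x ^ 2}.Nonempty :=
    ⟨_, ⟨0, 0, h0T, rfl⟩⟩
  obtain ⟨m, hm, hm0⟩ := exists_lt_of_lt_csSup hne hMpos
  obtain ⟨x0, t0, ht0, hmeq⟩ := hm
  have hx0K : x0 ∈ K := by
    apply hKx
    have hd := hf x0 x0 t0 t0 ht0 ht0
    rw [sub_self x0, enorm2_zero] at hd
    have hηt0 : 0 ≤ η * t0 := mul_nonneg hη.le ht0.1
    rw [hcdef, le_div_iff₀ hβ]
    nlinarith [enorm2_nonneg x0, sq_nonneg (enorm2 x0)]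
  have hdiagD : ((x0, t0), (x0, t0)) ∈ D := ⟨⟨hx0K, ht0⟩, ⟨hx0K, ht0⟩⟩
  have hmle : m ≤ F pb := by
    have := hpbmax hdiagD
    rw [hmeq, ← hdiag x0 t0]
    exact this
  have hFpos : 0 < F pb := lt_of_lt_of_le hm0 hmle
  -- global maximality
  have hglob : ∀ (x y : ℝ × ℝ) (t s : ℝ), t ∈ Set.Icc 0 T → s ∈ Set.Icc 0 T →
      psi u u' η β ε α x t y s ≤ F pb := by
    intro x y t s ht hs
    by_cases hxy : x ∈ K ∧ y ∈ K
    · exact hpbmax (⟨⟨hxy.1, ht⟩, ⟨hxy.2, hs⟩⟩ : ((x, t), (y, s)) ∈ D)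
    · have hbig : c < enorm2 x ^ 2 + enorm2 y ^ 2 := by
        rcases not_and_or.mp hxy with hx | hy
        · have : c < enorm2 x ^ 2 := lt_of_not_ge (fun h => hx (hKx x h))
          nlinarith [sq_nonneg (enorm2 y)]
        · have : c < enorm2 y ^ 2 := lt_of_not_ge (fun h => hy (hKx y h))
          nlinarith [sq_nonneg (enorm2 x)]
      have h1 := hub x y t s ht hs
      have h2 : S * T + 1 < β * (enorm2 x ^ 2 + enorm2 y ^ 2) := by
        have := (div_lt_iff₀ hβ).mp (hcdef ▸ hbig : (S * T + 1) / β < _)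
        linarith [mul_comm β (enorm2 x ^ 2 + enorm2 y ^ 2) ▸ this]
      have h3 : 0 ≤ enorm2 (x - y) ^ 2 / (2 * ε ^ 2) := by positivity
      have h4 : 0 ≤ (t - s) ^ 2 / α ^ 2 := by positivity
      linarith
  have htb : pb.1.2 ∈ Set.Icc 0 T := hpbD.1.2
  have hsb : pb.2.2 ∈ Set.Icc 0 T := hpbD.2.2
  -- M ≤ psi at max
  have hMle : Msup u u' η β T ≤ F pb := by
    unfold Msup
    apply csSup_le hne
    rintro m' ⟨x, t, ht, rfl⟩
    rw [← hdiag x t]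
    exact hglob x x t t ht ht
  -- quantitative bounds at the maximum
  have hubb := hub pb.1.1 pb.2.1 pb.1.2 pb.2.2 htb hsb
  have hFeq : psi u u' η β ε α pb.1.1 pb.1.2 pb.2.1 pb.2.2 = F pb := rfl
  rw [hFeq] at hubb
  have hA0 : 0 ≤ enorm2 (pb.1.1 - pb.2.1) ^ 2 / (2 * ε ^ 2) := by positivity
  have hB0 : 0 ≤ (pb.1.2 - pb.2.2) ^ 2 / α ^ 2 := by positivity
  have hG0 : 0 ≤ enorm2 pb.1.1 ^ 2 + enorm2 pb.2.1 ^ 2 := by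
    positivity
  have hβG0 : 0 ≤ β * (enorm2 pb.1.1 ^ 2 + enorm2 pb.2.1 ^ 2) := mul_nonneg hβ.le hG0
  have hST : 0 < S * T := mul_pos hS hT
  refine ⟨pb.1.1, pb.2.1, pb.1.2, pb.2.2, htb, hsb, hglob, hMle, ?_, ?_, ?_⟩
  · have hA : enorm2 (pb.1.1 - pb.2.1) ^ 2 / (2 * ε ^ 2) ≤ S * T + 1/2 := by linarith
    have := (div_le_iff₀ (by positivity : (0:ℝ) < 2 * ε ^ 2)).mp hA
    nlinarith [sq_nonneg ε]
  · have hB : (pb.1.2 - pb.2.2) ^ 2 / α ^ 2 ≤ S * T + 1/2 := by linarith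
    have := (div_le_iff₀ (by positivity : (0:ℝ) < α ^ 2)).mp hB
    nlinarith [sq_nonneg α]
  · have hC : β * (enorm2 pb.1.1 ^ 2 + enorm2 pb.2.1 ^ 2) ≤ S * T + 1/2 := by linarith
    rw [le_div_iff₀ hβ]
    nlinarith
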